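/- limsup_{m→∞} b(m)/h(m) = 1. -/
import Mathlib

/-- The piecewise linear function connecting `(0,0)` and the points
`(3^n/2, (√2+1)^n/2)` for `n ≥ 1`. On `[3^n/2, 3^(n+1)/2]` it is given by the
affine formula below. -/
noncomputable def h (x : ℝ) : ℝ :=
  if x ≤ 3 / 2 then (Real.sqrt 2 + 1) / 3 * x
  else
    let n : ℕ := (⌊Real.logb 3 (2 * x)⌋).toNat
    Real.sqrt 2 / 2 * ((Real.sqrt 2 + 1) / 3) ^ n * x
      + (Real.sqrt 2 + 1) ^ n * (2 - Real.sqrt 2) / 4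

noncomputable def hF (n : ℕ) (x : ℝ) : ℝ :=
  Real.sqrt 2 / 2 * ((Real.sqrt 2 + 1) / 3) ^ n * x
      + (Real.sqrt 2 + 1) ^ n * (2 - Real.sqrt 2) / 4

def L : ℕ → ℕ
  | 0 => 1
  | n+1 => 3 * L n - 1

lemma w_sq : Real.sqrt 2 ^ 2 = 2 := Real.sq_sqrt (by norm_num)
lemma w_lb : 1.414 ≤ Real.sqrt 2 := by nlinarith [w_sq, Real.sqrt_nonneg 2]
lemma w_ub : Real.sqrt 2 ≤ 1.415 := by nlinarith [w_sq, Real.sqrt_nonneg 2]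

lemma L_ge (n : ℕ) : n + 1 ≤ L n := by
  induction n with
  | zero => simp [L]
  | succ n ih => simp only [L]; omega

lemma L_succ (n : ℕ) : L (n+1) = 3 * L n - 1 := rfl

lemma twoL (n : ℕ) : 2 * L n = 3^n + 1 := by
  induction n with
  | zero => simp [L]
  | succ n ih =>
    have h1 := L_ge n
    have h3 : 3^(n+1) = 3 * 3^n := by ring
    simp only [L]; omega

lemma L_mono : Monotone L := by
  apply monotone_nat_of_le_succ
  intro n; have := L_ge n; simp only [L]; omega

lemma twoL_real (n : ℕ) : 2 * ((L n : ℕ) : ℝ) = 3^n + 1 := by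
  have := twoL n
  exact_mod_cast congrArg (fun m : ℕ => (m : ℝ)) this

lemma hF_step (n : ℕ) (x δ : ℝ) :
    hF (n+1) (3*x + δ) = (Real.sqrt 2 + 1) * hF n x
      + δ * (Real.sqrt 2/2) * ((Real.sqrt 2 + 1)/3)^(n+1) := by
  simp only [hF, pow_succ]; ring

lemma hF_one (n : ℕ) (x : ℝ) :
    hF n (x + 1) = hF n x + (Real.sqrt 2/2) * ((Real.sqrt 2 + 1)/3)^n := by
  simp only [hF]; ring

lemma pow3_cancel (n : ℕ) : ((Real.sqrt 2 + 1)/3)^n * 3^n = (Real.sqrt 2 + 1)^n := by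
  rw [← mul_pow]; congr 1; ring

lemma hF_L (n : ℕ) : hF n ((L n : ℕ) : ℝ) =
    (Real.sqrt 2 + 1)^n/2 + (Real.sqrt 2/4) * ((Real.sqrt 2 + 1)/3)^n := by
  have h1 := twoL_real n
  have h2 := pow3_cancel n
  simp only [hF]
  linear_combination (Real.sqrt 2/4 * ((Real.sqrt 2 + 1)/3)^n) * h1 + (Real.sqrt 2/4) * h2

lemma hi_real (n : ℕ) : ((L (n+1) - 1 : ℕ) : ℝ) = ((L (n+1) : ℕ) : ℝ) - 1 := by
  have := L_ge (n+1)
  push_cast [Nat.cast_sub (show 1 ≤ L (n+1) by omega)]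
  ring

lemma hF_hi (n : ℕ) : hF n ((L (n+1) - 1 : ℕ) : ℝ) =
    (Real.sqrt 2 + 1)^(n+1)/2 - (Real.sqrt 2/4) * ((Real.sqrt 2 + 1)/3)^n := by
  have h1 := twoL_real (n+1)
  have h2 := pow3_cancel n
  rw [hi_real n]
  simp only [hF, pow_succ]
  have h4 : (3:ℝ)^(n+1) = 3 * 3^n := by ring
  rw [h4] at h1
  linear_combination (Real.sqrt 2/4 * ((Real.sqrt 2 + 1)/3)^n) * h1 + (3*Real.sqrt 2/4) * h2

lemma pow_pack (n : ℕ) (hn : 2 ≤ n) :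
    0 < (Real.sqrt 2 + 1)^n ∧ 0 < (Real.sqrt 2 - 1)^n ∧
    (Real.sqrt 2 + 1)^n * (Real.sqrt 2 - 1)^n = 1 ∧
    3 + 2*Real.sqrt 2 ≤ (Real.sqrt 2 + 1)^n ∧
    33 * (Real.sqrt 2 - 1)^n ≤ (Real.sqrt 2 + 1)^n ∧
    0 < ((Real.sqrt 2 + 1)/3)^n ∧
    9 * ((Real.sqrt 2 + 1)/3)^n ≤ (Real.sqrt 2 + 1)^n ∧
    (3 + 2*Real.sqrt 2)/3 ≤ (Real.sqrt 2 + 1)^n * ((Real.sqrt 2 + 1)/3)^n := by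
  have hw := w_sq; have hwl := w_lb; have hwu := w_ub
  have hS0 : 0 < (Real.sqrt 2+1)^n := pow_pos (by nlinarith) n
  have hR0 : 0 < (Real.sqrt 2-1)^n := pow_pos (by nlinarith) n
  have hSR : (Real.sqrt 2+1)^n * (Real.sqrt 2-1)^n = 1 := by
    rw [← mul_pow, show (Real.sqrt 2+1)*(Real.sqrt 2-1) = 1 by nlinarith, one_pow]
  have hS6 : 3 + 2*Real.sqrt 2 ≤ (Real.sqrt 2+1)^n := by
    calc 3 + 2*Real.sqrt 2 = (Real.sqrt 2+1)^2 := by nlinarith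
    _ ≤ (Real.sqrt 2+1)^n := pow_le_pow_right₀ (by nlinarith) hn
  have hR33 : 33 * (Real.sqrt 2-1)^n ≤ (Real.sqrt 2+1)^n := by
    nlinarith [hSR, hS6, hS0, hR0, mul_le_mul hS6 hS6 (by nlinarith) (le_of_lt hS0)]
  have hXS : ((Real.sqrt 2+1)/3)^n = (Real.sqrt 2+1)^n * (1/3:ℝ)^n := by
    rw [← mul_pow]; congr 1; ring
  have hY0 : (0:ℝ) < (1/3:ℝ)^n := by positivity
  have hY9 : ((1:ℝ)/3)^n ≤ 1/9 := by
    calc ((1:ℝ)/3)^n ≤ (1/3:ℝ)^2 := pow_le_pow_of_le_one (by norm_num) (by norm_num) hn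
    _ = 1/9 := by norm_num
  have hX0 : 0 < ((Real.sqrt 2+1)/3)^n := by rw [hXS]; positivity
  have hX9 : 9 * ((Real.sqrt 2+1)/3)^n ≤ (Real.sqrt 2+1)^n := by
    rw [hXS]; nlinarith [hY9, hS0, hY0]
  have hSX : (3 + 2*Real.sqrt 2)/3 ≤ (Real.sqrt 2+1)^n * ((Real.sqrt 2+1)/3)^n := by
    have e : (Real.sqrt 2+1)^n * ((Real.sqrt 2+1)/3)^n = ((Real.sqrt 2+1)^2/3)^n := by
      rw [← mul_pow]; congr 1; ring
    rw [e]
    calc (3+2*Real.sqrt 2)/3 = (Real.sqrt 2+1)^2/3 := by nlinarith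
    _ ≤ ((Real.sqrt 2+1)^2/3)^n := le_self_pow₀ (by nlinarith) (by omega)
  exact ⟨hS0, hR0, hSR, hS6, hR33, hX0, hX9, hSX⟩

lemma h_eq (n : ℕ) (hn : 1 ≤ n) (x : ℝ) (h1 : (3:ℝ)^n ≤ 2*x) (h2 : 2*x < 3^(n+1)) :
    h x = hF n x := by
  have h3n : (3:ℝ) ≤ 3^n := by
    calc (3:ℝ) = 3^1 := by norm_num
    _ ≤ 3^n := by apply pow_le_pow_right₀ (by norm_num) hn
  have hxpos : (0:ℝ) < 2*x := by nlinarith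
  rcases eq_or_lt_of_le (show (3:ℝ)/2 ≤ x by nlinarith) with heq | hlt
  · have hn1 : n = 1 := by
      by_contra hne
      have h2n : 2 ≤ n := by omega
      have : (9:ℝ) ≤ 3^n := by
        calc (9:ℝ) = 3^2 := by norm_num
        _ ≤ 3^n := by apply pow_le_pow_right₀ (by norm_num) h2n
      nlinarith
    subst hn1
    have hx : x = 3/2 := heq.symm
    subst hx
    unfold h hF
    rw [if_pos le_rfl]
    have hw := w_sq
    nlinarith [w_lb, w_ub]
  · have hfl : ⌊Real.logb 3 (2*x)⌋ = (n:ℤ) := by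
      rw [Int.floor_eq_iff]
      have e1 : Real.logb 3 ((3:ℝ)^n) = n := by rw [Real.logb_pow]; simp
      have e2 : Real.logb 3 ((3:ℝ)^(n+1)) = n+1 := by rw [Real.logb_pow]; simp
      constructor
      · push_cast
        rw [← e1]
        exact Real.logb_le_logb_of_le (by norm_num) (pow_pos (by norm_num) n) h1
      · push_cast
        rw [← e2]
        exact Real.logb_lt_logb (by norm_num) hxpos h2
    unfold h
    rw [if_neg (by push_neg; exact hlt)]
    simp only [hfl]
    norm_num [hF]

set_option maxHeartbeats 16000000 in
theorem limsup_b_div_h (b : ℕ → ℝ)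
    (hb0 : b 0 = 0) (hb1 : b 1 = 1)
    (hrec0 : ∀ n : ℕ, b (3 * n) = b n)
    (hrec1 : ∀ n : ℕ, b (3 * n + 1) = Real.sqrt 2 * b n + b (n + 1))
    (hrec2 : ∀ n : ℕ, b (3 * n + 2) = b n + Real.sqrt 2 * b (n + 1)) :
    Filter.limsup (fun m : ℕ => b m / h m) Filter.atTop = 1 := by
  have hw := w_sq; have hwl := w_lb; have hwu := w_ub
  have hw0 : (0:ℝ) ≤ Real.sqrt 2 := Real.sqrt_nonneg 2
  -- nonnegativity
  have b_nonneg : ∀ m, 0 ≤ b m := by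
    intro m
    induction m using Nat.strong_induction_on with
    | _ m ih =>
      rcases Nat.lt_or_ge m 2 with hm | hm
      · interval_cases m
        · simp [hb0]
        · simp [hb1]
      · have h0 : m % 3 = 0 ∨ m % 3 = 1 ∨ m % 3 = 2 := by omega
        have hq : m / 3 < m := by omega
        have hq1 : m / 3 + 1 < m := by omega
        rcases h0 with h0 | h0 | h0
        · rw [show m = 3 * (m/3) by omega, hrec0]
          exact ih _ (by omega)
        · rw [show m = 3 * (m/3) + 1 by omega, hrec1]
          exact add_nonneg (mul_nonneg hw0 (ih _ hq)) (ih _ hq1)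
        · rw [show m = 3 * (m/3) + 2 by omega, hrec2]
          exact add_nonneg (ih _ hq) (mul_nonneg hw0 (ih _ hq1))
  -- endpoint identities
  have bL : ∀ n : ℕ, b (L n) = ((Real.sqrt 2+1)^n + (Real.sqrt 2-1)^n)/2 ∧
      b (L n - 1) = ((Real.sqrt 2+1)^n - (Real.sqrt 2-1)^n)/2 := by
    intro n
    induction n with
    | zero => simp [L, hb1, hb0]
    | succ n ih =>
      have hge := L_ge n
      have h1 : L (n+1) = 3 * (L n - 1) + 2 := by
        have := L_succ n; omega
      have h2 : L (n+1) - 1 = 3 * (L n - 1) + 1 := by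
        have := L_succ n; omega
      have hsub : L n - 1 + 1 = L n := by omega
      have e2 := hrec2 (L n - 1); rw [hsub] at e2
      have e1 := hrec1 (L n - 1); rw [hsub] at e1
      constructor
      · rw [h1, e2, ih.1, ih.2, pow_succ, pow_succ]; ring
      · rw [h2, e1, ih.1, ih.2, pow_succ, pow_succ]; ring
  -- main interior bound
  have Main : ∀ n, 2 ≤ n → ∀ k : ℕ, L n < k → k + 2 ≤ L (n+1) →
      b k ≤ 9/10 * hF n (k:ℝ) - (3 - 2*Real.sqrt 2)/2 * ((Real.sqrt 2+1)/3)^n := by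
    intro n hn
    induction n, hn using Nat.le_induction with
    | base =>
      intro k hk1 hk2
      have hL2 : L 2 = 5 := rfl
      have hL3 : L 3 = 14 := rfl
      rw [hL2] at hk1; rw [hL3] at hk2
      have e2 : b 2 = Real.sqrt 2 := by have := hrec2 0; norm_num [hb0, hb1] at this; exact this
      have e3 : b 3 = 1 := by have := hrec0 1; norm_num [hb1] at this; exact this
      have e4 : b 4 = 2*Real.sqrt 2 := by
        have := hrec1 1; norm_num [hb1, e2] at this; linarith
      have e6 : b 6 = Real.sqrt 2 := by have := hrec0 2; norm_num [e2] at this; exact this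
      have e7 : b 7 = 3 := by
        have t := hrec1 2; norm_num [e2, e3] at t; ring_nf at t; linarith [hw, t]
      have e8 : b 8 = 2*Real.sqrt 2 := by
        have := hrec2 2; norm_num [e2, e3] at this; linarith
      have e9 : b 9 = 1 := by have := hrec0 3; norm_num [e3] at this; exact this
      have e10 : b 10 = 3*Real.sqrt 2 := by
        have := hrec1 3; norm_num [e3, e4] at this; linarith
      have e11 : b 11 = 5 := by
        have t := hrec2 3; norm_num [e3, e4] at t; ring_nf at t; linarith [hw, t]
      have e12 : b 12 = 2*Real.sqrt 2 := by have := hrec0 4; norm_num [e4] at this; exact this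
      have hk2' : k ≤ 12 := by omega
      interval_cases k
      · rw [e6]; simp only [hF]; push_cast; ring_nf; nlinarith [hw, hwl, hwu]
      · rw [e7]; simp only [hF]; push_cast; ring_nf; nlinarith [hw, hwl, hwu]
      · rw [e8]; simp only [hF]; push_cast; ring_nf; nlinarith [hw, hwl, hwu]
      · rw [e9]; simp only [hF]; push_cast; ring_nf; nlinarith [hw, hwl, hwu]
      · rw [e10]; simp only [hF]; push_cast; ring_nf; nlinarith [hw, hwl, hwu]
      · rw [e11]; simp only [hF]; push_cast; ring_nf; nlinarith [hw, hwl, hwu]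
      · rw [e12]; simp only [hF]; push_cast; ring_nf; nlinarith [hw, hwl, hwu]
    | succ n hn IH =>
      intro k hk1 hk2
      have hL1 : L (n+1) = 3 * L n - 1 := L_succ n
      have hL2 : L (n+1+1) = 3 * L (n+1) - 1 := L_succ (n+1)
      have hgeN : n + 1 ≤ L n := L_ge n
      have hgeN1 : n + 2 ≤ L (n+1) := L_ge (n+1)
      obtain ⟨hS0, hR0, hSR, hS6, hR33, hX0, hX9, hSX⟩ := pow_pack n (by omega)
      have hmul1 : (Real.sqrt 2+1) * (Real.sqrt 2-1) = 1 := by nlinarith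
      have hFpos : ∀ j : ℕ, 0 ≤ hF n (j:ℝ) := by
        intro j
        have h1 : (0:ℝ) ≤ (j:ℝ) := Nat.cast_nonneg j
        have h3 : 0 ≤ Real.sqrt 2/2 * ((Real.sqrt 2+1)/3)^n * (j:ℝ) := by positivity
        simp only [hF]
        nlinarith [hS0]
      have h0 : k % 3 = 0 ∨ k % 3 = 1 ∨ k % 3 = 2 := by omega
      rcases h0 with h0 | h0 | h0
      · -- k = 3q
        obtain ⟨q, hkq⟩ : ∃ q, k = 3 * q := ⟨k/3, by omega⟩
        subst hkq
        have hbk : b (3*q) = b q := hrec0 q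
        have hc : ((3*q : ℕ):ℝ) = 3 * (q:ℝ) + 0 := by push_cast; ring
        have hsplit : q = L n ∨ q = L (n+1) - 1 ∨ (L n < q ∧ q + 2 ≤ L (n+1)) := by omega
        rcases hsplit with hq | hq | hq
        · subst hq
          rw [hbk, (bL n).1, hc, hF_step, hF_L]
          simp only [pow_succ]
          nlinarith [hS0, hR0, hSR, hS6, hR33, hX0, hX9, hw, hwl, hwu]
        · subst hq
          rw [hbk, (bL (n+1)).2, hc, hF_step, hF_hi]
          simp only [pow_succ]
          nlinarith [hS0, hR0, hSR, hS6, hR33, hX0, hX9, hw, hwl, hwu]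
        · have hIH := IH q hq.1 hq.2
          rw [hbk, hc, hF_step]
          simp only [pow_succ]
          nlinarith [hIH, hFpos q, hX0, hw, hwl, hwu, mul_nonneg hw0 (hFpos q),
            mul_nonneg hX0.le (show (0:ℝ) ≤ (3-2*Real.sqrt 2)*(2-Real.sqrt 2) by nlinarith)]
      · -- k = 3q+1
        obtain ⟨q, hkq⟩ : ∃ q, k = 3 * q + 1 := ⟨k/3, by omega⟩
        subst hkq
        have hbk : b (3*q+1) = Real.sqrt 2 * b q + b (q+1) := hrec1 q
        have hc : ((3*q+1 : ℕ):ℝ) = 3 * (q:ℝ) + 1 := by push_cast; ring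
        have hsplit : q = L n ∨ q = L (n+1) - 2 ∨ (L n < q ∧ q + 3 ≤ L (n+1)) := by omega
        rcases hsplit with hq | hq | hq
        · subst hq
          have hnm : n - 1 + 1 = n := by omega
          have hLp := L_succ (n-1); rw [hnm] at hLp
          have hge' := L_ge (n-1)
          have h31 : L n + 1 = 3 * L (n-1) := by omega
          have hb1q : b (L n + 1) = ((Real.sqrt 2+1)^(n-1) + (Real.sqrt 2-1)^(n-1))/2 := by
            rw [h31, hrec0]; exact (bL (n-1)).1
          have c1 : (Real.sqrt 2+1)^(n-1) * (Real.sqrt 2+1) = (Real.sqrt 2+1)^n := by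
            rw [← pow_succ, hnm]
          have c2 : (Real.sqrt 2-1)^(n-1) * (Real.sqrt 2-1) = (Real.sqrt 2-1)^n := by
            rw [← pow_succ, hnm]
          have ep1 : (Real.sqrt 2+1)^(n-1) = (Real.sqrt 2+1)^n * (Real.sqrt 2-1) := by
            calc (Real.sqrt 2+1)^(n-1) = (Real.sqrt 2+1)^(n-1) * ((Real.sqrt 2+1)*(Real.sqrt 2-1)) := by
                  rw [hmul1, mul_one]
            _ = ((Real.sqrt 2+1)^(n-1) * (Real.sqrt 2+1)) * (Real.sqrt 2-1) := by ring
            _ = (Real.sqrt 2+1)^n * (Real.sqrt 2-1) := by rw [c1]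
          have ep2 : (Real.sqrt 2-1)^(n-1) = (Real.sqrt 2-1)^n * (Real.sqrt 2+1) := by
            calc (Real.sqrt 2-1)^(n-1) = (Real.sqrt 2-1)^(n-1) * ((Real.sqrt 2-1)*(Real.sqrt 2+1)) := by
                  rw [show (Real.sqrt 2-1)*(Real.sqrt 2+1) = 1 by nlinarith, mul_one]
            _ = ((Real.sqrt 2-1)^(n-1) * (Real.sqrt 2-1)) * (Real.sqrt 2+1) := by ring
            _ = (Real.sqrt 2-1)^n * (Real.sqrt 2+1) := by rw [c2]
          rw [hbk, (bL n).1, hb1q, ep1, ep2, hc, hF_step, hF_L]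
          simp only [pow_succ]
          nlinarith [hS0, hR0, hSR, hS6, hR33, hX0, hX9, hw, hwl, hwu]
        · have hq3 : q = 3 * (L n - 1) := by omega
          have hbqv : b q = ((Real.sqrt 2+1)^n - (Real.sqrt 2-1)^n)/2 := by
            rw [hq3, hrec0]; exact (bL n).2
          have hq1v : b (q+1) = ((Real.sqrt 2+1)^(n+1) - (Real.sqrt 2-1)^(n+1))/2 := by
            rw [show q+1 = L (n+1) - 1 by omega]; exact (bL (n+1)).2
          have hc1 : (q:ℝ) + 1 = ((L (n+1) - 1 : ℕ):ℝ) := by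
            have hqq : q + 1 = L (n+1) - 1 := by omega
            exact_mod_cast congrArg (fun m : ℕ => (m:ℝ)) hqq
          have hFq : hF n (q:ℝ) = (Real.sqrt 2+1)^(n+1)/2 - (Real.sqrt 2/4) * ((Real.sqrt 2+1)/3)^n
              - (Real.sqrt 2/2) * ((Real.sqrt 2+1)/3)^n := by
            have hh := hF_one n (q:ℝ)
            rw [hc1, hF_hi] at hh
            linarith
          rw [hbk, hbqv, hq1v, hc, hF_step, hFq]
          simp only [pow_succ]
          nlinarith [hS0, hR0, hSR, hS6, hR33, hX0, hX9, hw, hwl, hwu]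
        · have hIH := IH q hq.1 (by omega)
          have hIH1 := IH (q+1) (by omega) (by omega)
          have hc1 : ((q+1 : ℕ):ℝ) = (q:ℝ) + 1 := by push_cast; ring
          rw [hc1, hF_one] at hIH1
          rw [hbk, hc, hF_step]
          simp only [pow_succ]
          nlinarith [hIH1, mul_nonneg hw0 (sub_nonneg.2 hIH),
            mul_nonneg hX0.le (show (0:ℝ) ≤ Real.sqrt 2 - 1 by nlinarith), hw, hwl, hwu]
      · -- k = 3q+2
        obtain ⟨q, hkq⟩ : ∃ q, k = 3 * q + 2 := ⟨k/3, by omega⟩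
        subst hkq
        have hbk : b (3*q+2) = b q + Real.sqrt 2 * b (q+1) := hrec2 q
        have hc : ((3*q+2 : ℕ):ℝ) = 3 * (q:ℝ) + 2 := by push_cast; ring
        have hsplit : q = L n ∨ q = L (n+1) - 2 ∨ (L n < q ∧ q + 3 ≤ L (n+1)) := by omega
        rcases hsplit with hq | hq | hq
        · subst hq
          have hnm : n - 1 + 1 = n := by omega
          have hLp := L_succ (n-1); rw [hnm] at hLp
          have hge' := L_ge (n-1)
          have h31 : L n + 1 = 3 * L (n-1) := by omega
          have hb1q : b (L n + 1) = ((Real.sqrt 2+1)^(n-1) + (Real.sqrt 2-1)^(n-1))/2 := by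
            rw [h31, hrec0]; exact (bL (n-1)).1
          have c1 : (Real.sqrt 2+1)^(n-1) * (Real.sqrt 2+1) = (Real.sqrt 2+1)^n := by
            rw [← pow_succ, hnm]
          have c2 : (Real.sqrt 2-1)^(n-1) * (Real.sqrt 2-1) = (Real.sqrt 2-1)^n := by
            rw [← pow_succ, hnm]
          have ep1 : (Real.sqrt 2+1)^(n-1) = (Real.sqrt 2+1)^n * (Real.sqrt 2-1) := by
            calc (Real.sqrt 2+1)^(n-1) = (Real.sqrt 2+1)^(n-1) * ((Real.sqrt 2+1)*(Real.sqrt 2-1)) := by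
                  rw [hmul1, mul_one]
            _ = ((Real.sqrt 2+1)^(n-1) * (Real.sqrt 2+1)) * (Real.sqrt 2-1) := by ring
            _ = (Real.sqrt 2+1)^n * (Real.sqrt 2-1) := by rw [c1]
          have ep2 : (Real.sqrt 2-1)^(n-1) = (Real.sqrt 2-1)^n * (Real.sqrt 2+1) := by
            calc (Real.sqrt 2-1)^(n-1) = (Real.sqrt 2-1)^(n-1) * ((Real.sqrt 2-1)*(Real.sqrt 2+1)) := by
                  rw [show (Real.sqrt 2-1)*(Real.sqrt 2+1) = 1 by nlinarith, mul_one]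
            _ = ((Real.sqrt 2-1)^(n-1) * (Real.sqrt 2-1)) * (Real.sqrt 2+1) := by ring
            _ = (Real.sqrt 2-1)^n * (Real.sqrt 2+1) := by rw [c2]
          rw [hbk, (bL n).1, hb1q, ep1, ep2, hc, hF_step, hF_L]
          simp only [pow_succ]
          nlinarith [hS0, hR0, hSR, hS6, hR33, hX0, hX9, hw, hwl, hwu]
        · have hq3 : q = 3 * (L n - 1) := by omega
          have hbqv : b q = ((Real.sqrt 2+1)^n - (Real.sqrt 2-1)^n)/2 := by
            rw [hq3, hrec0]; exact (bL n).2
          have hq1v : b (q+1) = ((Real.sqrt 2+1)^(n+1) - (Real.sqrt 2-1)^(n+1))/2 := by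
            rw [show q+1 = L (n+1) - 1 by omega]; exact (bL (n+1)).2
          have hc1 : (q:ℝ) + 1 = ((L (n+1) - 1 : ℕ):ℝ) := by
            have hqq : q + 1 = L (n+1) - 1 := by omega
            exact_mod_cast congrArg (fun m : ℕ => (m:ℝ)) hqq
          have hFq : hF n (q:ℝ) = (Real.sqrt 2+1)^(n+1)/2 - (Real.sqrt 2/4) * ((Real.sqrt 2+1)/3)^n
              - (Real.sqrt 2/2) * ((Real.sqrt 2+1)/3)^n := by
            have hh := hF_one n (q:ℝ)
            rw [hc1, hF_hi] at hh
            linarith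
          rw [hbk, hbqv, hq1v, hc, hF_step, hFq]
          simp only [pow_succ]
          nlinarith [hS0, hR0, hSR, hS6, hR33, hX0, hX9, hw, hwl, hwu]
        · have hIH := IH q hq.1 (by omega)
          have hIH1 := IH (q+1) (by omega) (by omega)
          have hc1 : ((q+1 : ℕ):ℝ) = (q:ℝ) + 1 := by push_cast; ring
          rw [hc1, hF_one] at hIH1
          rw [hbk, hc, hF_step]
          simp only [pow_succ]
          nlinarith [hIH, mul_nonneg hw0 (sub_nonneg.2 hIH1),
            mul_nonneg hX0.le (show (0:ℝ) ≤ Real.sqrt 2 - 1 by nlinarith), hw, hwl, hwu]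
  -- `h` agrees with the affine formula on each block
  have hcast_block : ∀ n, 1 ≤ n → ∀ m : ℕ, L n ≤ m → m < L (n+1) → h (m:ℝ) = hF n (m:ℝ) := by
    intro n hn m h1 h2
    have t1 := twoL n
    have t2 := twoL (n+1)
    have hn1 : 3^n + 1 ≤ 2*m := by omega
    have hn2 : 2*m + 1 ≤ 3^(n+1) := by omega
    apply h_eq n hn
    · have : ((3:ℝ)^n + 1) ≤ 2*(m:ℝ) := by exact_mod_cast hn1
      linarith
    · have : 2*(m:ℝ) + 1 ≤ (3:ℝ)^(n+1) := by exact_mod_cast hn2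
      linarith
  -- upper bound on each block
  have block_up : ∀ n, 2 ≤ n → ∀ m : ℕ, L n ≤ m → m < L (n+1) →
      0 < h (m:ℝ) ∧ b m ≤ (1 + (1/3:ℝ)^n) * h (m:ℝ) := by
    intro n hn m h1 h2
    obtain ⟨hS0, hR0, hSR, hS6, hR33, hX0, hX9, hSX⟩ := pow_pack n (by omega)
    have hEq := hcast_block n (by omega) m h1 h2
    have hXY : ((Real.sqrt 2+1)/3)^n = (Real.sqrt 2+1)^n * (1/3:ℝ)^n := by
      rw [← mul_pow]; congr 1; ring
    have hY0 : (0:ℝ) < (1/3:ℝ)^n := by positivity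
    have hY9 : (1/3:ℝ)^n ≤ 1/9 := by
      calc ((1:ℝ)/3)^n ≤ (1/3:ℝ)^2 := pow_le_pow_of_le_one (by norm_num) (by norm_num) hn
      _ = 1/9 := by norm_num
    have hmcast : (0:ℝ) ≤ (m:ℝ) := Nat.cast_nonneg m
    have hpos : 0 < hF n (m:ℝ) := by
      simp only [hF]
      nlinarith [hS0, hwu, mul_nonneg (mul_nonneg (by positivity : (0:ℝ) ≤ Real.sqrt 2/2) hX0.le) hmcast]
    have hL1 : L (n+1) = 3 * L n - 1 := L_succ n
    have hgeN : n + 1 ≤ L n := L_ge n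
    refine ⟨hEq ▸ hpos, ?_⟩
    have hsplit : m = L n ∨ m = L (n+1) - 1 ∨ (L n < m ∧ m + 2 ≤ L (n+1)) := by omega
    rcases hsplit with hq | hq | hq
    · subst hq
      rw [hEq, hF_L, (bL n).1]
      have key : ((Real.sqrt 2-1)^n) * ((Real.sqrt 2+1)^n)
          ≤ (Real.sqrt 2/2 * ((Real.sqrt 2+1)/3)^n) * ((Real.sqrt 2+1)^n) := by
        nlinarith [hSX, hSR, hwl, hwu]
      have hRX := le_of_mul_le_mul_right key hS0
      have e2 : (0:ℝ) ≤ (Real.sqrt 2+1)^n/2 + Real.sqrt 2/4 * ((Real.sqrt 2+1)/3)^n := by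
        positivity
      have e3 := mul_nonneg hY0.le e2
      nlinarith [hRX, e3]
    · subst hq
      rw [hEq, hF_hi, (bL (n+1)).2]
      simp only [pow_succ, hXY]
      have hbr : (0:ℝ) ≤ (Real.sqrt 2+1)/2 - Real.sqrt 2/4 - Real.sqrt 2/4*(1/3:ℝ)^n := by
        nlinarith [hY9, hY0, hwu, hwl]
      have e1 := mul_nonneg (mul_pos hS0 hY0).le hbr
      have e2 := mul_nonneg hR0.le (show (0:ℝ) ≤ Real.sqrt 2 - 1 by nlinarith)
      nlinarith [e1, e2]
    · have hMain := Main n hn m hq.1 hq.2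
      rw [hEq]
      have hgX : (0:ℝ) ≤ (3 - 2*Real.sqrt 2)/2 * ((Real.sqrt 2+1)/3)^n :=
        mul_nonneg (by nlinarith [hwu]) hX0.le
      have e1 := mul_nonneg hY0.le hpos.le
      nlinarith [hMain, hpos, hgX, e1]
  -- lower bound at the right endpoints
  have hi_low : ∀ n, 2 ≤ n → h (((L (n+1) - 1 : ℕ)):ℝ) ≤ b (L (n+1) - 1) := by
    intro n hn
    obtain ⟨hS0, hR0, hSR, hS6, hR33, hX0, hX9, hSX⟩ := pow_pack n (by omega)
    have hL1 : L (n+1) = 3 * L n - 1 := L_succ n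
    have hgeN : n + 1 ≤ L n := L_ge n
    have hEq := hcast_block n (by omega) (L (n+1) - 1) (by omega) (by omega)
    rw [hEq, hF_hi, (bL (n+1)).2]
    simp only [pow_succ]
    have key : ((Real.sqrt 2-1)^n * (Real.sqrt 2-1)) * ((Real.sqrt 2+1)^n)
        ≤ (Real.sqrt 2/2 * ((Real.sqrt 2+1)/3)^n) * ((Real.sqrt 2+1)^n) := by
      nlinarith [hSX, hSR, hwl, hwu]
    have hRX := le_of_mul_le_mul_right key hS0
    nlinarith [hRX]
  -- block decomposition of ℕ
  have exists_block : ∀ m : ℕ, 5 ≤ m → ∃ n, 2 ≤ n ∧ L n ≤ m ∧ m < L (n+1) := by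
    intro m
    induction m with
    | zero => intro hh; exact absurd hh (by norm_num)
    | succ m ih =>
      intro hm
      rcases Nat.lt_or_ge m 5 with h5 | h5
      · have hm5 : m + 1 = 5 := by omega
        rw [hm5]
        exact ⟨2, le_refl 2, by norm_num [show L 2 = 5 from rfl],
          by norm_num [show L 3 = 14 from rfl]⟩
      · obtain ⟨n, hn2, hn1, hn3⟩ := ih h5
        rcases Nat.lt_or_ge (m+1) (L (n+1)) with hlt | hge
        · exact ⟨n, hn2, by omega, hlt⟩
        · refine ⟨n+1, by omega, by omega, ?_⟩
          have e1 := L_succ (n+1)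
          have e2 := L_ge (n+1)
          omega
  -- eventual upper bound
  have upper : ∀ η : ℝ, 0 < η → ∀ᶠ m : ℕ in Filter.atTop, b m / h (m:ℝ) ≤ 1 + η := by
    intro η hη
    obtain ⟨N, hN⟩ : ∃ N : ℕ, (1/3:ℝ)^N < η := exists_pow_lt_of_lt_one hη (by norm_num)
    rw [Filter.eventually_atTop]
    refine ⟨max (L (N+2)) 5, ?_⟩
    intro m hm
    obtain ⟨n, hn2, h1, h2⟩ := exists_block m (le_trans (le_max_right _ _) hm)
    have hnN : N ≤ n := by
      by_contra hcon
      push_neg at hcon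
      have : L (N+2) ≤ m := le_trans (le_max_left _ _) hm
      have hmono : L (n+1) ≤ L (N+2) := L_mono (by omega)
      omega
    obtain ⟨hpos, hub⟩ := block_up n hn2 m h1 h2
    have hY : (1/3:ℝ)^n ≤ (1/3:ℝ)^N := pow_le_pow_of_le_one (by norm_num) (by norm_num) hnN
    rw [div_le_iff₀ hpos]
    have hc : (1 + (1/3:ℝ)^n) ≤ 1 + η := by linarith
    nlinarith [hub, hpos, mul_le_mul_of_nonneg_right hc hpos.le]
  -- every eventual upper bound is at least 1
  have lower : ∀ a : ℝ, (∀ᶠ m : ℕ in Filter.atTop, b m / h (m:ℝ) ≤ a) → 1 ≤ a := by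
    intro a ha
    rw [Filter.eventually_atTop] at ha
    obtain ⟨M, hM⟩ := ha
    set n := M + 2 with hndef
    have hge := L_ge (n+1)
    have hL1 : L (n+1) = 3 * L n - 1 := L_succ n
    have hgeN : n + 1 ≤ L n := L_ge n
    have h1 := hi_low n (by omega)
    have hpos := (block_up n (by omega) (L (n+1) - 1) (by omega) (by omega)).1
    have hone : 1 ≤ b (L (n+1) - 1) / h ((L (n+1) - 1 : ℕ):ℝ) := (one_le_div hpos).2 h1
    exact le_trans hone (hM _ (by omega))
  -- assemble
  rw [Filter.limsup_eq]
  apply le_antisymm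
  · apply le_of_forall_pos_le_add
    intro η hη
    exact csInf_le ⟨1, fun a ha => lower a ha⟩ (upper η hη)
  · exact le_csInf ⟨1+1, upper 1 one_pos⟩ (fun a ha => lower a ha)
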